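/- Let γ : ℝ → ℝ² be a smooth closed immersed plane curve parametrized by arc-length with period L > 0, with winding number ω (i.e. ∫_γ k ds = 2ωπ), and suppose m = sup_{x∈ℝ²} #{ s ∈ [0,L) : γ(s) = x } is finite. Then K_osc(γ) ≥ 16m² − 4ω²π². -/

import Mathlib

open Real MeasureTheory
open scoped ENNReal

noncomputable section

/-- Euclidean dot product on `ℝ × ℝ`. -/
def dotp (v w : ℝ × ℝ) : ℝ := v.1 * w.1 + v.2 * w.2

/-- Rotation of a vector by `π/2`. -/
def perp (v : ℝ × ℝ) : ℝ × ℝ := (-v.2, v.1)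

/-- Unit normal of an arc-length parametrised curve: the unit tangent rotated by `π/2`. -/
def sNu (γ : ℝ → ℝ × ℝ) : ℝ → ℝ × ℝ := fun s => perp (deriv γ s)

/-- Curvature `k = ⟨γ_ss, ν⟩` of an arc-length parametrised plane curve. -/
def sCurv (γ : ℝ → ℝ × ℝ) : ℝ → ℝ := fun s => dotp (deriv (deriv γ) s) (sNu γ s)

/-!
Cut the curve at the `m` parameters where it passes through a point of maximal multiplicity: this
gives `m` closed loops, of lengths `ℓᵢ` with `∑ ℓᵢ = L`. The unit tangent `τ` of a loop has mean
zero, so `∫ (1 - ⟪τ(s), τ(M)⟫) ds = ℓ` for its midpoint `M`. On the other hand, by Cauchy–Schwarz,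
`1 - ⟪τ(s), τ(M)⟫ = ‖τ(s) - τ(M)‖² / 2 ≤ |s - M| / 2 · ∫ k²`, the integral taken over the half of
the loop containing `s`; integrating gives `ℓ ≤ ℓ² ∫ k² / 16`. Cauchy–Schwarz over the loops turns
`ℓᵢ ∫ᵢ k² ≥ 16` into `L ∫ k² ≥ 16 m²`, and `K_osc = L ∫ k² - (∫ k)² = L ∫ k² - 4ω²π²`.
-/

open intervalIntegral
open scoped RealInnerProductSpace

theorem intervalIntegral.mul_integral_sq_sub_average {f : ℝ → ℝ} {a b : ℝ}
    (hf : IntervalIntegrable f volume a b) (hf2 : IntervalIntegrable (fun x => f x ^ 2) volume a b)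
    (hab : a ≠ b) :
    (b - a) * ∫ x in a..b, (f x - (∫ x in a..b, f x) / (b - a)) ^ 2
      = (b - a) * (∫ x in a..b, f x ^ 2) - (∫ x in a..b, f x) ^ 2 := by
  set I := ∫ x in a..b, f x
  set c := I / (b - a)
  have hc : c * (b - a) = I := div_mul_cancel₀ _ (sub_ne_zero.2 hab.symm)
  have hexp : ∀ x, (f x - c) ^ 2 = f x ^ 2 - 2 * c * f x + c ^ 2 := fun x => by ring
  simp_rw [hexp]
  rw [integral_add (hf2.sub (hf.const_mul _)) intervalIntegrable_const,
    integral_sub hf2 (hf.const_mul _), integral_const_mul, integral_const, smul_eq_mul]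
  linear_combination (c * (b - a) - I) * hc

theorem intervalIntegral.sq_integral_le_mul_integral_sq {f : ℝ → ℝ} {a b : ℝ}
    (hf : IntervalIntegrable f volume a b) (hf2 : IntervalIntegrable (fun x => f x ^ 2) volume a b)
    (hab : a ≤ b) :
    (∫ x in a..b, f x) ^ 2 ≤ (b - a) * ∫ x in a..b, f x ^ 2 := by
  rcases hab.eq_or_lt with rfl | hlt
  · simp
  have hnn : 0 ≤ ∫ x in a..b, (f x - (∫ x in a..b, f x) / (b - a)) ^ 2 :=
    integral_nonneg hab fun x _ => sq_nonneg _
  nlinarith [mul_integral_sq_sub_average hf hf2 hlt.ne, mul_nonneg (sub_nonneg.2 hab) hnn]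

theorem Finset.mul_card_sq_le_sum_mul_sum {ι : Type*} (s : Finset ι) {ℓ E : ι → ℝ} {c : ℝ}
    (hℓ : ∀ i ∈ s, 0 ≤ ℓ i) (hE : ∀ i ∈ s, 0 ≤ E i) (h : ∀ i ∈ s, c ≤ ℓ i * E i) :
    c * (s.card : ℝ) ^ 2 ≤ (∑ i ∈ s, ℓ i) * ∑ i ∈ s, E i := by
  have hcs := s.sum_sq_le_sum_mul_sum_of_sq_le_mul hℓ hE (r := fun _ => √c) fun i hi => by
    rw [Real.sq_sqrt']
    exact max_le (h i hi) (mul_nonneg (hℓ i hi) (hE i hi))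
  rw [Finset.sum_const, nsmul_eq_mul, mul_pow, Real.sq_sqrt'] at hcs
  nlinarith [le_max_left c 0, sq_nonneg (s.card : ℝ)]

theorem mul_sq_le_mul_integral_of_forall_lt {g : ℝ → ℝ} (hg : 0 ≤ g) (hgi : LocallyIntegrable g)
    (P : ℕ → ℝ) (n : ℕ) {c : ℝ} (hP : ∀ i < n, P i ≤ P (i + 1))
    (h : ∀ i < n, c ≤ (P (i + 1) - P i) * ∫ x in P i..P (i + 1), g x) :
    c * (n : ℝ) ^ 2 ≤ (P n - P 0) * ∫ x in P 0..P n, g x := by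
  have := (Finset.range n).mul_card_sq_le_sum_mul_sum
    (ℓ := fun i => P (i + 1) - P i) (E := fun i => ∫ x in P i..P (i + 1), g x)
    (fun i hi => sub_nonneg.2 (hP i (Finset.mem_range.1 hi)))
    (fun i hi => integral_nonneg (hP i (Finset.mem_range.1 hi)) fun x _ => hg x)
    (fun i hi => h i (Finset.mem_range.1 hi))
  rwa [Finset.card_range, Finset.sum_range_sub,
    sum_integral_adjacent_intervals fun i _ =>
      (hgi.integrableOn_isCompact isCompact_uIcc).intervalIntegrable] at this

theorem Finset.exists_cyclic_enumeration (S : Finset ℝ) (hne : S.Nonempty) {L : ℝ}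
    (hS : ∀ s ∈ S, ∀ t ∈ S, s < t + L) :
    ∃ P : ℕ → ℝ, (∀ i < S.card, P i ∈ S ∧ P i < P (i + 1)) ∧ P S.card = P 0 + L := by
  have hn : 0 < S.card := S.card_pos.2 hne
  set e := S.orderEmbOfFin rfl
  refine ⟨fun i => if h : i < S.card then e ⟨i, h⟩ else e ⟨0, hn⟩ + L, fun i hi => ?_, ?_⟩
  · simp only [dif_pos hi]
    refine ⟨S.orderEmbOfFin_mem rfl _, ?_⟩
    split_ifs
    · exact e.strictMono (Fin.mk_lt_mk.2 i.lt_succ_self)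
    · exact hS _ (S.orderEmbOfFin_mem rfl _) _ (S.orderEmbOfFin_mem rfl _)
  · simp [hn]

theorem Function.Periodic.deriv {F : Type*} [NormedAddCommGroup F] [NormedSpace ℝ F]
    {f : ℝ → F} {c : ℝ} (hf : Function.Periodic f c) : Function.Periodic (deriv f) c :=
  fun x => by rw [← deriv_comp_add_const, hf.funext]

section UnitVectorField

variable {E : Type*} [NormedAddCommGroup E] [InnerProductSpace ℝ E] {τ τ' : ℝ → E}

theorem inner_eq_zero_of_forall_norm_eq_one (hτ : ∀ t, HasDerivAt τ (τ' t) t)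
    (hunit : ∀ t, ‖τ t‖ = 1) (t : ℝ) : ⟪τ t, τ' t⟫ = 0 := by
  have hconst : (fun t => ‖τ t‖ ^ 2) = fun _ => (1 : ℝ) := funext fun t => by simp [hunit]
  have := (hτ t).norm_sq
  rw [hconst] at this
  linarith [this.unique (hasDerivAt_const t (1 : ℝ))]

variable [CompleteSpace E]

theorem norm_sub_sq_le_mul_integral_norm_deriv_sq (hτ : ∀ t, HasDerivAt τ (τ' t) t)
    (hτ' : Continuous τ') {s t : ℝ} (hst : s ≤ t) :
    ‖τ t - τ s‖ ^ 2 ≤ (t - s) * ∫ u in s..t, ‖τ' u‖ ^ 2 := by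
  have hftc : ∫ u in s..t, τ' u = τ t - τ s :=
    integral_eq_sub_of_hasDerivAt (fun u _ => hτ u) (hτ'.intervalIntegrable s t)
  calc ‖τ t - τ s‖ ^ 2 ≤ (∫ u in s..t, ‖τ' u‖) ^ 2 := by
        rw [← hftc]
        gcongr
        exact norm_integral_le_integral_norm hst
    _ ≤ (t - s) * ∫ u in s..t, ‖τ' u‖ ^ 2 :=
        sq_integral_le_mul_integral_sq (hτ'.norm.intervalIntegrable s t)
          ((hτ'.norm.pow 2).intervalIntegrable s t) hst

variable (hτ : ∀ t, HasDerivAt τ (τ' t) t) (hτ' : Continuous τ') (hunit : ∀ t, ‖τ t‖ = 1)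
include hτ hτ' hunit

theorem one_sub_inner_le_mul_integral_norm_deriv_sq {s t : ℝ} (hst : s ≤ t) :
    1 - ⟪τ t, τ s⟫ ≤ (t - s) / 2 * ∫ u in s..t, ‖τ' u‖ ^ 2 := by
  have := norm_sub_sq_le_mul_integral_norm_deriv_sq hτ hτ' hst
  rw [norm_sub_sq_real, hunit, hunit] at this
  linarith

theorem integral_one_sub_inner_right_le {c d : ℝ} (hcd : c ≤ d) :
    ∫ s in c..d, (1 - ⟪τ d, τ s⟫) ≤ (d - c) ^ 2 / 4 * ∫ u in c..d, ‖τ' u‖ ^ 2 := by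
  have hτc : Continuous τ := continuous_iff_continuousAt.2 fun t => (hτ t).continuousAt
  have hg : Continuous fun u => ‖τ' u‖ ^ 2 := hτ'.norm.pow 2
  calc ∫ s in c..d, (1 - ⟪τ d, τ s⟫)
      ≤ ∫ s in c..d, (d - s) * ((∫ u in c..d, ‖τ' u‖ ^ 2) / 2) := by
        refine integral_mono_on hcd (Continuous.intervalIntegrable (by fun_prop) c d)
          (Continuous.intervalIntegrable (by fun_prop) c d) fun s hs => ?_
        refine (one_sub_inner_le_mul_integral_norm_deriv_sq hτ hτ' hunit hs.2).trans ?_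
        rw [div_mul_eq_mul_div, mul_div_assoc]
        gcongr
        · linarith [hs.2]
        · exact integral_mono_interval hs.1 hs.2 le_rfl (.of_forall fun u => by positivity)
            (hg.intervalIntegrable c d)
    _ = (d - c) ^ 2 / 4 * ∫ u in c..d, ‖τ' u‖ ^ 2 := by
        rw [intervalIntegral.integral_mul_const, integral_comp_sub_left (fun x => x)]
        simp
        ring

theorem integral_one_sub_inner_left_le {c d : ℝ} (hcd : c ≤ d) :
    ∫ s in c..d, (1 - ⟪τ c, τ s⟫) ≤ (d - c) ^ 2 / 4 * ∫ u in c..d, ‖τ' u‖ ^ 2 := by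
  have := integral_one_sub_inner_right_le (τ := fun t => τ (-t)) (τ' := fun t => -τ' (-t))
    (fun t => by simpa [Function.comp_def] using (hτ (-t)).scomp t (hasDerivAt_neg t)) (by fun_prop)
    (fun t => hunit (-t)) (neg_le_neg hcd)
  simp only [neg_neg, norm_neg, neg_sub_neg] at this
  rwa [integral_comp_neg (fun s => 1 - ⟪τ c, τ s⟫), integral_comp_neg (fun u => ‖τ' u‖ ^ 2),
    neg_neg, neg_neg] at this

theorem sixteen_le_mul_integral_norm_deriv_sq (hmean : ∫ t in a..b, τ t = 0) (hab : a < b) :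
    16 ≤ (b - a) * ∫ t in a..b, ‖τ' t‖ ^ 2 := by
  have hτc : Continuous τ := continuous_iff_continuousAt.2 fun t => (hτ t).continuousAt
  have hg : Continuous fun u => ‖τ' u‖ ^ 2 := hτ'.norm.pow 2
  set M := (a + b) / 2 with hM
  have hdefect : Continuous fun s => 1 - ⟪τ M, τ s⟫ := by fun_prop
  have htot : ∫ s in a..b, (1 - ⟪τ M, τ s⟫) = b - a := by
    have : ∫ s in a..b, ⟪τ M, τ s⟫ = 0 := by
      simpa [hmean] using
        (innerSL ℝ (τ M)).intervalIntegral_comp_comm (hτc.intervalIntegrable (μ := volume) a b)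
    rw [integral_sub intervalIntegrable_const
      (Continuous.intervalIntegrable (μ := volume) (by fun_prop) a b),
      this]
    simp
  have hleft := integral_one_sub_inner_right_le hτ hτ' hunit (c := a) (d := M) (by linarith)
  have hright := integral_one_sub_inner_left_le hτ hτ' hunit (c := M) (d := b) (by linarith)
  have hsplit := integral_add_adjacent_intervals (hdefect.intervalIntegrable (μ := volume) a M)
    (hdefect.intervalIntegrable M b)
  have henergy := integral_add_adjacent_intervals (hg.intervalIntegrable (μ := volume) a M)
    (hg.intervalIntegrable M b)
  have hMa : M - a = (b - a) / 2 := by linarith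
  have hbM : b - M = (b - a) / 2 := by linarith
  rw [hMa] at hleft
  rw [hbM] at hright
  have hbound : b - a ≤ (b - a) ^ 2 / 16 * ∫ t in a..b, ‖τ' t‖ ^ 2 := by
    rw [← henergy]
    linarith
  nlinarith

end UnitVectorField

theorem dotp_sq_add_dotp_perp_sq (v w : ℝ × ℝ) :
    dotp v w ^ 2 + dotp v (perp w) ^ 2 = dotp v v * dotp w w := by
  simp only [dotp, perp]
  ring

-- `ℝ × ℝ` carries the sup norm, so tangent vectors are moved to `ℂ` to get the Euclidean one.
theorem sq_norm_equivRealProdCLM_symm (v : ℝ × ℝ) :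
    ‖Complex.equivRealProdCLM.symm v‖ ^ 2 = dotp v v := by
  simp [Complex.sq_norm, Complex.normSq_apply, dotp]

theorem inner_equivRealProdCLM_symm (v w : ℝ × ℝ) :
    ⟪Complex.equivRealProdCLM.symm v, Complex.equivRealProdCLM.symm w⟫ = dotp v w := by
  simp [Complex.inner, dotp]
  ring

theorem norm_equivRealProdCLM_symm_eq_one {v : ℝ × ℝ} (hv : dotp v v = 1) :
    ‖Complex.equivRealProdCLM.symm v‖ = 1 :=
  (pow_eq_one_iff_of_nonneg (norm_nonneg _) two_ne_zero).1 <| by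
    rw [sq_norm_equivRealProdCLM_symm, hv]

section ArcLengthCurve

variable {γ : ℝ → ℝ × ℝ} (hγ : ContDiff ℝ 2 γ) (harc : ∀ s, dotp (deriv γ s) (deriv γ s) = 1)
include hγ

theorem continuous_sCurv : Continuous (sCurv γ) := by
  have h1 : Continuous (deriv γ) := hγ.continuous_deriv (by norm_num)
  have h2 : Continuous (deriv (deriv γ)) := (hγ.deriv' (n := 1)).continuous_deriv le_rfl
  unfold sCurv sNu dotp perp
  fun_prop

theorem hasDerivAt_complexTangent (s : ℝ) :
    HasDerivAt (fun t => Complex.equivRealProdCLM.symm (deriv γ t))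
      (Complex.equivRealProdCLM.symm (deriv (deriv γ) s)) s :=
  Complex.equivRealProdCLM.symm.hasFDerivAt.comp_hasDerivAt s
    (((hγ.deriv' (n := 1)).differentiable one_ne_zero) s).hasDerivAt

include harc

theorem sq_norm_complexCurvature (s : ℝ) :
    ‖Complex.equivRealProdCLM.symm (deriv (deriv γ) s)‖ ^ 2 = sCurv γ s ^ 2 := by
  have horth := inner_eq_zero_of_forall_norm_eq_one (hasDerivAt_complexTangent hγ)
    (fun t => norm_equivRealProdCLM_symm_eq_one (harc t)) s
  rw [real_inner_comm, inner_equivRealProdCLM_symm] at horth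
  have := dotp_sq_add_dotp_perp_sq (deriv (deriv γ) s) (deriv γ s)
  rw [harc, mul_one] at this
  rw [sq_norm_equivRealProdCLM_symm, ← this, sCurv, sNu]
  simp [horth]

theorem sixteen_le_mul_integral_sCurv_sq {a b : ℝ} (hab : a < b) (hloop : γ a = γ b) :
    16 ≤ (b - a) * ∫ s in a..b, sCurv γ s ^ 2 := by
  have hmean : ∫ t in a..b, Complex.equivRealProdCLM.symm (deriv γ t) = 0 := by
    have := integral_eq_sub_of_hasDerivAt (a := a) (b := b)
      (f := fun t => Complex.equivRealProdCLM.symm (γ t))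
      (f' := fun t => Complex.equivRealProdCLM.symm (deriv γ t))
      (fun t _ => Complex.equivRealProdCLM.symm.hasFDerivAt.comp_hasDerivAt t
        ((hγ.differentiable (by norm_num)) t).hasDerivAt)
      ((Complex.equivRealProdCLM.symm.continuous.comp
        (hγ.continuous_deriv (by norm_num))).intervalIntegrable a b)
    rwa [hloop, sub_self] at this
  have := sixteen_le_mul_integral_norm_deriv_sq (hasDerivAt_complexTangent hγ)
    (by fun_prop) (fun t => norm_equivRealProdCLM_symm_eq_one (harc t)) hmean hab
  simpa only [sq_norm_complexCurvature hγ harc] using this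

theorem sixteen_mul_card_sq_le_mul_integral_sCurv_sq {L : ℝ} (hper : Function.Periodic γ L)
    (hL : 0 ≤ L) {x : ℝ × ℝ} (S : Finset ℝ) (hS : ∀ s ∈ S, s ∈ Set.Ico 0 L ∧ γ s = x) :
    16 * (S.card : ℝ) ^ 2 ≤ L * ∫ s in (0 : ℝ)..L, sCurv γ s ^ 2 := by
  rcases S.eq_empty_or_nonempty with rfl | hne
  · simpa using mul_nonneg hL (integral_nonneg hL fun s _ => sq_nonneg (sCurv γ s))
  obtain ⟨P, hP, hPn⟩ := S.exists_cyclic_enumeration hne (L := L)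
    fun s hs t ht => by linarith [(hS s hs).1.2, (hS t ht).1.1]
  have hPx : ∀ i ≤ S.card, γ (P i) = x := by
    intro i hi
    rcases hi.lt_or_eq with hi | rfl
    · exact (hS _ (hP i hi).1).2
    · rw [hPn, hper]
      exact (hS _ (hP 0 (S.card_pos.2 hne)).1).2
  have hcurv_per : Function.Periodic (fun s => sCurv γ s ^ 2) L := fun s => by
    simp only [sCurv, sNu, hper.deriv s, hper.deriv.deriv s]
  have := mul_sq_le_mul_integral_of_forall_lt (fun s => sq_nonneg (sCurv γ s))
    ((continuous_sCurv hγ).pow 2).locallyIntegrable P S.card (fun i hi => (hP i hi).2.le)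
    fun i hi => sixteen_le_mul_integral_sCurv_sq hγ harc (hP i hi).2
      ((hPx i hi.le).trans (hPx (i + 1) hi).symm)
  rwa [hPn, add_sub_cancel_left, hcurv_per.intervalIntegral_add_eq (P 0) 0, zero_add] at this

end ArcLengthCurve

/-- **Multiplicity bound via the oscillation of curvature** (Theorem 1.5):
for a smooth closed immersed arc-length parametrised plane curve of length `L`
with winding number `ω` and maximal multiplicity `m`,
`K_osc(γ) ≥ 16m² - 4ω²π²`. -/
theorem stmt_17
    (γ : ℝ → ℝ × ℝ) (L : ℝ) (hL : 0 < L)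
    (hsmooth : ContDiff ℝ (⊤ : ℕ∞) γ)
    (hper : ∀ s, γ (s + L) = γ s)
    (harc : ∀ s, dotp (deriv γ s) (deriv γ s) = 1)
    (ω : ℝ)
    (hω : (∫ s in (0:ℝ)..L, sCurv γ s) = 2 * ω * π)
    (m : ℕ)
    (hfin : ∀ x : ℝ × ℝ, {s ∈ Set.Ico 0 L | γ s = x}.Finite)
    (hm : IsGreatest {n : ℕ | ∃ x : ℝ × ℝ, n = ({s ∈ Set.Ico 0 L | γ s = x}).ncard} m) :
    L * (∫ s in (0:ℝ)..L, (sCurv γ s - (∫ u in (0:ℝ)..L, sCurv γ u) / L)^2)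
      ≥ 16 * (m : ℝ)^2 - 4 * ω^2 * π^2 := by
  have hγ : ContDiff ℝ 2 γ := hsmooth.of_le (WithTop.coe_le_coe.2 le_top)
  obtain ⟨x, hx⟩ := hm.1
  have hmult : 16 * (m : ℝ) ^ 2 ≤ L * ∫ s in (0 : ℝ)..L, sCurv γ s ^ 2 := by
    have := sixteen_mul_card_sq_le_mul_integral_sCurv_sq hγ harc hper hL.le (hfin x).toFinset
      fun s hs => (hfin x).mem_toFinset.1 hs
    rwa [← Set.ncard_eq_toFinset_card _ (hfin x), ← hx] at this
  have hk := (continuous_sCurv hγ).intervalIntegrable (μ := volume) 0 L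
  have hk2 := ((continuous_sCurv hγ).pow 2).intervalIntegrable (μ := volume) 0 L
  have hosc := mul_integral_sq_sub_average hk hk2 hL.ne
  rw [sub_zero] at hosc
  rw [hosc, hω]
  linarith [hmult, show (2 * ω * π) ^ 2 = 4 * ω ^ 2 * π ^ 2 by ring]

end
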